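/- For θ ∈ [0, π/2] let |φ_z(θ)⟩ := cos(θ/2)|00⟩ + sin(θ/2)|11⟩, let Ω ∈ [0, 4/3], and let q_N ∈ [0,1]. Applying the composed channel D_{q_N}∘E³_Ω to each qubit (modeling port-based entanglement teleportation of the state through a resource affected by phase-flip noise) yields M[((D_{q_N}∘E³_Ω) ⊗ (D_{q_N}∘E³_Ω))(|φ_z(θ)⟩⟨φ_z(θ)|)] = max(0, q_N²·M_up − (1−q_N²)/2), where M_up := max(0, (1−3Ω/2)²·sin θ). -/

import Mathlib

open Matrix Kronecker
open scoped ComplexOrder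

noncomputable section

/-- 2×2 complex matrices (one qubit). -/
abbrev Mat2 := Matrix (Fin 2) (Fin 2) ℂ

/-- 4×4 complex matrices indexed by `(Fin 2) × (Fin 2)` (two qubits). -/
abbrev Mat4 := Matrix (Fin 2 × Fin 2) (Fin 2 × Fin 2) ℂ

/-- The identity and the three Pauli matrices: σ₀, σ₁, σ₂, σ₃. -/
def pauli : Fin 4 → Mat2 :=
  ![1, !![0, 1; 1, 0], !![0, -Complex.I; Complex.I, 0], !![1, 0; 0, -1]]

/-- Weights `(p₀, p₁, p₂, p₃)` with `p₀ := 4 - (p₁ + p₂ + p₃)`. -/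
def pw (p : Fin 3 → ℝ) : Fin 4 → ℝ := ![4 - (p 0 + p 1 + p 2), p 0, p 1, p 2]

/-- Single-qubit Pauli channel `E_p(ρ) = Σ_k (p_k/4) σ_k ρ σ_k`. -/
def pauliCh (p : Fin 3 → ℝ) (ρ : Mat2) : Mat2 :=
  ∑ k : Fin 4, ((pw p k / 4 : ℝ) : ℂ) • (pauli k * ρ * pauli k)

/-- `E_p ⊗ id` acting on two-qubit matrices. -/
def pauliFst (p : Fin 3 → ℝ) (ρ : Mat4) : Mat4 :=
  ∑ k : Fin 4, ((pw p k / 4 : ℝ) : ℂ) • ((pauli k ⊗ₖ 1) * ρ * (pauli k ⊗ₖ 1))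

/-- Local Pauli channel `E_p ⊗ E_p'` acting on two-qubit matrices. -/
def pauliLoc (p p' : Fin 3 → ℝ) (ρ : Mat4) : Mat4 :=
  ∑ k : Fin 4, ∑ l : Fin 4,
    ((pw p k * pw p' l / 16 : ℝ) : ℂ) •
      ((pauli k ⊗ₖ pauli l) * ρ * (pauli k ⊗ₖ pauli l))

/-- Partial transpose on the first qubit. -/
def ptranspose (ρ : Mat4) : Mat4 := fun x y => ρ (y.1, x.2) (x.1, y.2)

/-- Smallest (real) eigenvalue of a matrix. -/
def lambdaMin (A : Mat4) : ℝ :=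
  sInf {c : ℝ | ∃ v : Fin 2 × Fin 2 → ℂ, v ≠ 0 ∧ A *ᵥ v = (c : ℂ) • v}

/-- Measure of entanglement `M(ρ) = max (0, −2 λ_min(ρ^{T₁}))`. -/
def entMeasure (ρ : Mat4) : ℝ := max 0 (-2 * lambdaMin (ptranspose ρ))

/-- Two-qubit density matrix. -/
def IsDensity (ρ : Mat4) : Prop := ρ.PosSemidef ∧ ρ.trace = 1

/-- Depolarizing channel `D_q(ρ) = (1−q)·tr(ρ)·I/2 + q·ρ`. -/
def depol (q : ℝ) (ρ : Mat2) : Mat2 :=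
  (((1 - q : ℝ) : ℂ) * ρ.trace / 2) • (1 : Mat2) + ((q : ℝ) : ℂ) • ρ

/-- Basis vector `|ij⟩` of the two-qubit space. -/
def ket2 (i j : Fin 2) : (Fin 2 × Fin 2) → ℂ := fun x => if x = (i, j) then 1 else 0

/-- The four Bell states `|Ψ⁰⟩, |Ψ¹⟩, |Ψ²⟩, |Ψ³⟩`. -/
def bell : Fin 4 → ((Fin 2 × Fin 2) → ℂ) :=
  ![(((Real.sqrt 2 : ℝ) : ℂ))⁻¹ • (ket2 0 0 + ket2 1 1),
    (((Real.sqrt 2 : ℝ) : ℂ))⁻¹ • (ket2 0 1 + ket2 1 0),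
    (((Real.sqrt 2 : ℝ) : ℂ) * Complex.I)⁻¹ • (ket2 0 1 - ket2 1 0),
    (((Real.sqrt 2 : ℝ) : ℂ))⁻¹ • (ket2 0 0 - ket2 1 1)]

/-- Rank-one projector `|ψ⟩⟨ψ|`. -/
def proj (ψ : (Fin 2 × Fin 2) → ℂ) : Mat4 := fun a b => ψ a * (starRingEnd ℂ) (ψ b)

/-- Pauli-channel probability vector of the depolarizing channel `D_q`. -/
def depVec (q : ℝ) : Fin 3 → ℝ := fun _ => 1 - q

/-- Pauli-channel probability vector of the phase-flip channel `E³_Ω`. -/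
def phaseVec (Ω : ℝ) : Fin 3 → ℝ := ![0, 0, 3 * Ω]

/-- The Schmidt-form pure state `|φ_z(θ)⟩ = cos(θ/2)|00⟩ + sin(θ/2)|11⟩`. -/
def phiZ (θ : ℝ) : (Fin 2 × Fin 2) → ℂ :=
  ((Real.cos (θ / 2) : ℝ) : ℂ) • ket2 0 0 + ((Real.sin (θ / 2) : ℝ) : ℂ) • ket2 1 1

/-! The X-shaped two-qubit matrices (nonzero only on the diagonal and the anti-diagonal, with
symmetric real entries) are stable under local Pauli channels and under the partial transpose.
The phase flip multiplies each coherence by `1 - 3Ω/2` per qubit; the depolarizing channel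
multiplies it by `q` per qubit and mixes the diagonal. The partial transpose exchanges the
inner coherence (between `|01⟩` and `|10⟩`) with the outer one (between `|00⟩` and `|11⟩`).
Since `|φ_z(θ)⟩` has only an outer coherence, the partially transposed output is block diagonal
with eigenvalues two nonnegative populations and `M ± W`, where `M = (1 - q²)/4` and
`W = q² (1 - 3Ω/2)² sin θ / 2 ≥ 0`; so the negativity is `max 0 (2 (W - M))`. -/

/-- The X-matrix in the basis `|00⟩, |01⟩, |10⟩, |11⟩`: diagonal `(d₀, m, m, d₁)`, `t` between
`|01⟩` and `|10⟩`, `w` between `|00⟩` and `|11⟩`. -/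
def xMat (d₀ d₁ m t w : ℝ) : Mat4 := fun x y =>
  if x = y then (if x.1 ≠ x.2 then m else if x.1 = 0 then d₀ else d₁)
  else if x.1 ≠ y.1 ∧ x.2 ≠ y.2 then (if x.1 = x.2 then w else t)
  else 0

lemma proj_schmidt (a b : ℝ) :
    proj ((a : ℂ) • ket2 0 0 + (b : ℂ) • ket2 1 1) = xMat (a ^ 2) (b ^ 2) 0 0 (a * b) := by
  ext ⟨i, j⟩ ⟨k, l⟩
  fin_cases i <;> fin_cases j <;> fin_cases k <;> fin_cases l <;>
    simp [proj, ket2, xMat, sq, mul_comm]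

set_option maxHeartbeats 1000000 in
lemma pauliLoc_phaseVec_xMat (Ω Ω' d₀ d₁ m t w : ℝ) :
    pauliLoc (phaseVec Ω) (phaseVec Ω') (xMat d₀ d₁ m t w)
      = xMat d₀ d₁ m ((1 - 3 * Ω / 2) * (1 - 3 * Ω' / 2) * t)
          ((1 - 3 * Ω / 2) * (1 - 3 * Ω' / 2) * w) := by
  ext ⟨i, j⟩ ⟨k, l⟩
  fin_cases i <;> fin_cases j <;> fin_cases k <;> fin_cases l <;>
    simp [pauliLoc, pw, phaseVec, pauli, mul_apply, Fintype.sum_prod_type, Fin.sum_univ_two,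
      Fin.sum_univ_four, xMat, Matrix.sum_apply, one_apply] <;>
    ring

set_option maxHeartbeats 1000000 in
lemma pauliLoc_depVec_xMat (q d₀ d₁ m t w : ℝ) :
    pauliLoc (depVec q) (depVec q) (xMat d₀ d₁ m t w)
      = xMat (((1 + q) / 2) ^ 2 * d₀ + ((1 - q) / 2) ^ 2 * d₁ + (1 - q ^ 2) / 2 * m)
          (((1 + q) / 2) ^ 2 * d₁ + ((1 - q) / 2) ^ 2 * d₀ + (1 - q ^ 2) / 2 * m)
          ((1 + q ^ 2) / 2 * m + (1 - q ^ 2) / 4 * (d₀ + d₁)) (q ^ 2 * t) (q ^ 2 * w) := by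
  ext ⟨i, j⟩ ⟨k, l⟩
  fin_cases i <;> fin_cases j <;> fin_cases k <;> fin_cases l <;>
    simp [pauliLoc, pw, depVec, pauli, mul_apply, Fintype.sum_prod_type, Fin.sum_univ_two,
      Fin.sum_univ_four, xMat, Matrix.sum_apply, one_apply] <;>
    ring_nf <;> simp only [Complex.I_sq] <;> ring

lemma ptranspose_xMat (d₀ d₁ m t w : ℝ) :
    ptranspose (xMat d₀ d₁ m t w) = xMat d₀ d₁ m w t := by
  ext ⟨i, j⟩ ⟨k, l⟩
  fin_cases i <;> fin_cases j <;> fin_cases k <;> fin_cases l <;> simp [ptranspose, xMat]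

lemma eigenvalue_xMat_cases {d₀ d₁ m t c : ℝ} {v : Fin 2 × Fin 2 → ℂ} (hv : v ≠ 0)
    (h : xMat d₀ d₁ m t 0 *ᵥ v = (c : ℂ) • v) :
    c = d₀ ∨ c = d₁ ∨ c = m + t ∨ c = m - t := by
  by_contra! hc
  obtain ⟨h₀, h₁, hplus, hminus⟩ := hc
  have e00 := congrFun h (0, 0)
  have e01 := congrFun h (0, 1)
  have e10 := congrFun h (1, 0)
  have e11 := congrFun h (1, 1)
  simp only [mulVec, dotProduct, xMat, Fin.isValue, ne_eq, not_true_eq_false, ↓reduceIte,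
    Complex.ofReal_zero, ite_self, ite_mul, zero_mul, Finset.sum_ite_eq, Finset.mem_univ,
    Pi.smul_apply, smul_eq_mul, mul_eq_mul_right_iff, Complex.ofReal_inj, zero_ne_one,
    not_false_eq_true, Fintype.sum_prod_type, Prod.mk.injEq, Fin.sum_univ_two, one_ne_zero,
    and_false, and_true, ite_not, zero_add, add_zero] at e00 e01 e10 e11
  have hsum : (v (0, 1) + v (1, 0)) * ((c : ℂ) - (m + t : ℝ)) = 0 := by
    push_cast; linear_combination -e01 - e10
  have hdiff : (v (0, 1) - v (1, 0)) * ((c : ℂ) - (m - t : ℝ)) = 0 := by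
    push_cast; linear_combination -e01 + e10
  simp only [mul_eq_zero, sub_eq_zero, Complex.ofReal_inj] at hsum hdiff
  have h01 : v (0, 1) = 0 := by
    linear_combination (hsum.resolve_right hplus + hdiff.resolve_right hminus) / 2
  have h10 : v (1, 0) = 0 := by
    linear_combination (hsum.resolve_right hplus - hdiff.resolve_right hminus) / 2
  apply hv
  ext ⟨i, j⟩
  fin_cases i <;> fin_cases j
  exacts [e00.resolve_left (Ne.symm h₀), h01, h10, e11.resolve_left (Ne.symm h₁)]

lemma xMat_mulVec_eigenvectors (d₀ d₁ m t : ℝ) :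
    xMat d₀ d₁ m t 0 *ᵥ ket2 0 0 = (d₀ : ℂ) • ket2 0 0 ∧
    xMat d₀ d₁ m t 0 *ᵥ ket2 1 1 = (d₁ : ℂ) • ket2 1 1 ∧
    xMat d₀ d₁ m t 0 *ᵥ (ket2 0 1 + ket2 1 0) = ((m + t : ℝ) : ℂ) • (ket2 0 1 + ket2 1 0) ∧
    xMat d₀ d₁ m t 0 *ᵥ (ket2 0 1 - ket2 1 0) = ((m - t : ℝ) : ℂ) • (ket2 0 1 - ket2 1 0) := by
  refine ⟨?_, ?_, ?_, ?_⟩ <;> ext ⟨i, j⟩ <;> fin_cases i <;> fin_cases j <;>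
    simp [mulVec, dotProduct, Fintype.sum_prod_type, xMat, ket2] <;> ring

lemma lambdaMin_xMat (d₀ d₁ m t : ℝ) :
    lambdaMin (xMat d₀ d₁ m t 0) = min (min d₀ d₁) (min (m + t) (m - t)) := by
  have heig : {c : ℝ | ∃ v, v ≠ 0 ∧ xMat d₀ d₁ m t 0 *ᵥ v = (c : ℂ) • v}
      = {d₀, d₁, m + t, m - t} := by
    ext c
    refine ⟨fun ⟨v, hv, h⟩ => eigenvalue_xMat_cases hv h, ?_⟩
    obtain ⟨h₀, h₁, hplus, hminus⟩ := xMat_mulVec_eigenvectors d₀ d₁ m t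
    rintro (rfl | rfl | rfl | rfl)
    · exact ⟨_, fun h => by simpa [ket2] using congrFun h (0, 0), h₀⟩
    · exact ⟨_, fun h => by simpa [ket2] using congrFun h (1, 1), h₁⟩
    · exact ⟨_, fun h => by simpa [ket2] using congrFun h (0, 1), hplus⟩
    · exact ⟨_, fun h => by simpa [ket2] using congrFun h (0, 1), hminus⟩
  rw [lambdaMin, heig, csInf_insert (Set.toFinite _).bddBelow (by simp),
    csInf_insert (Set.toFinite _).bddBelow (by simp),
    csInf_insert (Set.toFinite _).bddBelow (by simp), csInf_singleton, min_assoc]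

lemma max_zero_neg_two_mul_min {a b m w : ℝ} (ha : 0 ≤ a) (hb : 0 ≤ b) (hw : 0 ≤ w) :
    max 0 (-2 * min (min a b) (min (m + w) (m - w))) = max 0 (2 * (w - m)) := by
  rcases le_total 0 (m - w) with h | h
  · have hmin : 0 ≤ min (min a b) (min (m + w) (m - w)) :=
      le_min (le_min ha hb) (le_min (by linarith) h)
    rw [max_eq_left (by linarith), max_eq_left (by linarith)]
  · rw [min_eq_right (by linarith : m - w ≤ m + w),
      min_eq_right (le_min (by linarith) (by linarith) : m - w ≤ min a b)]
    ring_nf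

theorem entMeasure_PBET_upper_general (θ Ω qN : ℝ)
    (hθ : θ ∈ Set.Icc (0 : ℝ) (Real.pi / 2)) :
    entMeasure (pauliLoc (depVec qN) (depVec qN)
        (pauliLoc (phaseVec Ω) (phaseVec Ω) (proj (phiZ θ))))
      = max 0 (qN ^ 2 * max 0 ((1 - 3 * Ω / 2) ^ 2 * Real.sin θ)
          - (1 - qN ^ 2) / 2) := by
  have hsin : Real.cos (θ / 2) * Real.sin (θ / 2) = Real.sin θ / 2 := by
    have h := Real.sin_two_mul (θ / 2)
    rw [show 2 * (θ / 2) = θ by ring] at h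
    linarith
  have hsin_nonneg : 0 ≤ Real.sin θ :=
    Real.sin_nonneg_of_nonneg_of_le_pi hθ.1 (by linarith [hθ.2, Real.pi_pos])
  rw [phiZ, proj_schmidt, pauliLoc_phaseVec_xMat, pauliLoc_depVec_xMat, entMeasure,
    ptranspose_xMat]
  simp only [mul_zero, add_zero, zero_add, hsin]
  rw [lambdaMin_xMat, max_zero_neg_two_mul_min (by positivity) (by positivity)
      (mul_nonneg (sq_nonneg _) (mul_nonneg (mul_self_nonneg _) (by linarith))),
    max_eq_right (mul_nonneg (sq_nonneg _) hsin_nonneg)]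
  congr 1
  linear_combination (qN ^ 2 - 1) / 2 * Real.cos_sq_add_sin_sq (θ / 2)

/-- PBET upper bound — `D_{q_N} ∘ E³_Ω` on each qubit of the
Schmidt-form state. -/
theorem entMeasure_PBET_upper (θ Ω qN : ℝ)
    (hθ : θ ∈ Set.Icc (0 : ℝ) (Real.pi / 2)) (hΩ : Ω ∈ Set.Icc (0 : ℝ) (4/3))
    (hqN : qN ∈ Set.Icc (0 : ℝ) 1) :
    entMeasure (pauliLoc (depVec qN) (depVec qN)
        (pauliLoc (phaseVec Ω) (phaseVec Ω) (proj (phiZ θ))))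
      = max 0 (qN ^ 2 * max 0 ((1 - 3 * Ω / 2) ^ 2 * Real.sin θ)
          - (1 - qN ^ 2) / 2) :=
  entMeasure_PBET_upper_general θ Ω qN hθ
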